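/- Let p be a prime, B a commutative F_p-algebra, and l ≥ 0 an integer with base-p expansion l = l_0 + l_1·p + ... + l_s·p^s. For the l-th symmetric power ρ_l of the tautological representation of GL_2(B) on homogeneous polynomials of degree l in X, Y, the submatrix ρ_l^⋆(γ) of ρ_l(γ) obtained by deleting the (r+1)-th row and column whenever the binomial coefficient C(l, r) is divisible by p, is a square matrix of size ∏_i (l_i + 1), and γ ↦ ρ_l^⋆(γ) defines a group homomorphism GL_2(B) → GL_{∏_i(l_i+1)}(B) isomorphic to the tensor product ρ_{l_0} ⊗ ρ_{l_1}^{(1)} ⊗ ... ⊗ ρ_{l_s}^{(s)}, where M^{(i)} denotes entrywise raising to the power p^i. -/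

import Mathlib

open Polynomial

/-- The matrix of the `r`-th symmetric power `ρ_r` of the tautological representation of
`GL_2(B)`, in the basis `X^{r-i}Y^i` (`i = 0, …, r`): the `(j,i)` entry is the coefficient
of `X^{r-j}Y^j` in `(aX + cY)^{r-i} (bX + dY)^i`, computed after dehomogenizing `Y = 1`. -/
noncomputable def symPowMat {B : Type*} [CommRing B] (r : ℕ) (g : Matrix (Fin 2) (Fin 2) B) :
    Matrix (Fin (r + 1)) (Fin (r + 1)) B :=
  Matrix.of fun j i =>
    (((C (g 0 0)) * X + C (g 1 0)) ^ (r - (i : ℕ)) *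
        ((C (g 0 1)) * X + C (g 1 1)) ^ (i : ℕ)).coeff (r - (j : ℕ))

/-- The index set of `ρ_l^⋆`: those `0 ≤ r ≤ l` with `p ∤ C(l,r)`. -/
abbrev goodIdx (p l : ℕ) := {r : Fin (l + 1) // ¬ p ∣ Nat.choose l (r : ℕ)}

/-- The submatrix `ρ_l^⋆(γ)` of `ρ_l(γ)` keeping the rows and columns indexed by `r` with
`p ∤ C(l,r)`. -/
noncomputable def rhoStar {B : Type*} [CommRing B] (p l : ℕ) (g : Matrix (Fin 2) (Fin 2) B) :
    Matrix (goodIdx p l) (goodIdx p l) B :=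
  Matrix.of fun j i => symPowMat l g j.1 i.1

/-- The index set of the tensor product `ρ_{l_0} ⊗ ρ_{l_1}^{(1)} ⊗ ⋯ ⊗ ρ_{l_s}^{(s)}`,
where `l = l_0 + l_1 p + ⋯ + l_s p^s` is the base-`p` expansion. -/
abbrev tensorIdx (p l : ℕ) := (i : Fin (Nat.digits p l).length) → Fin ((Nat.digits p l).get i + 1)

/-- The matrix of the tensor product `ρ_{l_0} ⊗ ρ_{l_1}^{(1)} ⊗ ⋯ ⊗ ρ_{l_s}^{(s)}`, where
`M^{(i)}` is the entrywise `p^i`-th power Frobenius twist. -/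
noncomputable def rhoTensor {B : Type*} [CommRing B] (p l : ℕ) (g : Matrix (Fin 2) (Fin 2) B) :
    Matrix (tensorIdx p l) (tensorIdx p l) B :=
  Matrix.of fun j i =>
    ∏ k : Fin (Nat.digits p l).length,
      symPowMat ((Nat.digits p l).get k) (g.map (· ^ p ^ (k : ℕ))) (j k) (i k)


/-!
`ρ_l(γ)` is the matrix of the substitution `(X, Y) ↦ (aX + cY, bX + dY)` on binary forms of
degree `l`, which makes `ρ_l` multiplicative. In characteristic `p`, if the digits of `i` are
bounded by those of `l`, Frobenius factors `(aX + cY)^(l-i) (bX + dY)^i` as a product over the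
digits `k` of forms of degree `l_k < p` in `X^(p^k), Y^(p^k)` whose coefficients are the entries
of `ρ_{l_k}(γ^(k))`. By Lucas' theorem, `p ∤ C(l, r)` exactly when the digits of `r` are bounded
by those of `l`, so reading coefficients digit by digit shows that such a column of `ρ_l(γ)`
vanishes off the rows of `ρ_l^⋆`, which is therefore still multiplicative, and that the
entries of `ρ_l^⋆(γ)` are those of the tensor product, indexed through `r ↦ (r_k)_k`.
-/

namespace Nat

def digit (p k n : ℕ) : ℕ := n / p ^ k % p

def DigitwiseLE (p j l : ℕ) : Prop := ∀ k, digit p k j ≤ digit p k l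

variable {p : ℕ}

@[simp] lemma digit_zero (p n : ℕ) : digit p 0 n = n % p := by simp [digit]

@[simp] lemma digit_zero_right (p k : ℕ) : digit p k 0 = 0 := by simp [digit]

lemma digit_succ (p k n : ℕ) : digit p (k + 1) n = digit p k (n / p) := by
  rw [digit, digit, Nat.div_div_eq_div_mul, pow_succ']

lemma digit_eq_zero_of_lt {n k : ℕ} (h : n < p ^ k) : digit p k n = 0 := by
  simp [digit, Nat.div_eq_of_lt h]

lemma getElem_digits (hp : 1 < p) (n k : ℕ) (hk : k < (p.digits n).length) :
    (p.digits n)[k] = digit p k n := by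
  rw [← List.getD_eq_getElem _ 0 hk, getD_digits n k hp]
  rfl

lemma sum_digit_mul_pow {a r : ℕ} (hr : r < p ^ a) :
    ∑ k : Fin a, digit p k r * p ^ (k : ℕ) = r := by
  have h := congrArg Fin.val (finFunctionFinEquiv.apply_symm_apply (⟨r, hr⟩ : Fin (p ^ a)))
  rwa [finFunctionFinEquiv_apply] at h

lemma digit_sum_mul_pow {a : ℕ} (t : Fin a → ℕ) (ht : ∀ k, t k < p) (m : Fin a) :
    digit p m (∑ k, t k * p ^ (k : ℕ)) = t m := by
  have h := congrArg (fun f => (f m : ℕ))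
    (finFunctionFinEquiv.symm_apply_apply fun k => (⟨t k, ht k⟩ : Fin p))
  rwa [finFunctionFinEquiv_symm_apply_val, finFunctionFinEquiv_apply] at h

lemma sum_mul_pow_lt {a : ℕ} (t : Fin a → ℕ) (ht : ∀ k, t k < p) :
    ∑ k, t k * p ^ (k : ℕ) < p ^ a := by
  simpa [finFunctionFinEquiv_apply] using
    (finFunctionFinEquiv fun k => (⟨t k, ht k⟩ : Fin p)).isLt

lemma digitwiseLE_iff {j l : ℕ} :
    DigitwiseLE p j l ↔ j % p ≤ l % p ∧ DigitwiseLE p (j / p) (l / p) := by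
  unfold DigitwiseLE
  rw [← and_forall_add_one]
  simp only [digit_zero, digit_succ]

lemma DigitwiseLE.le (hp : 1 < p) {j l : ℕ} (h : DigitwiseLE p j l) : j ≤ l := by
  induction j using Nat.strong_induction_on generalizing l with | _ j ih =>
  rcases j.eq_zero_or_pos with rfl | hj
  · exact zero_le l
  rw [digitwiseLE_iff] at h
  have := Nat.mul_le_mul_left p (ih (j / p) (div_lt_self hj hp) h.2)
  have := mod_add_div j p
  have := mod_add_div l p
  omega

lemma not_dvd_choose_iff_le (hp : p.Prime) {a b : ℕ} (ha : a < p) :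
    ¬ p ∣ a.choose b ↔ b ≤ a := by
  refine ⟨fun h => not_lt.1 fun hab => h (by rw [choose_eq_zero_of_lt hab]; exact dvd_zero p),
    fun hba hdvd => ?_⟩
  have : p ∣ a ! := choose_mul_factorial_mul_factorial hba ▸
    dvd_mul_of_dvd_left (dvd_mul_of_dvd_left hdvd _) _
  exact absurd (hp.dvd_factorial.1 this) (not_le.2 ha)

theorem not_dvd_choose_iff_digitwiseLE (hp : p.Prime) {l j : ℕ} :
    ¬ p ∣ l.choose j ↔ DigitwiseLE p j l := by
  induction j using Nat.strong_induction_on generalizing l with | _ j ih =>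
  rcases j.eq_zero_or_pos with rfl | hj
  · simpa [DigitwiseLE] using hp.one_lt.ne'
  have := Fact.mk hp
  rw [Choose.choose_modEq_choose_mod_mul_choose_div_nat.dvd_iff dvd_rfl, hp.dvd_mul, not_or,
    not_dvd_choose_iff_le hp (mod_lt l hp.pos), ih (j / p) (div_lt_self hj hp.one_lt)]
  exact digitwiseLE_iff.symm

lemma sub_eq_mod_sub_add_mul_div_sub {j l : ℕ} (h₀ : j % p ≤ l % p) (h : j ≤ l) :
    l - j = (l % p - j % p) + p * (l / p - j / p) := by
  have := Nat.mul_le_mul_left p (Nat.div_le_div_right (c := p) h)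
  have := mod_add_div j p
  have := mod_add_div l p
  rw [Nat.mul_sub]
  omega

lemma mod_lt_sub_mod {j l : ℕ} (hp : 0 < p) (h₀ : l % p < j % p) (h : j ≤ l) :
    l % p < (l - j) % p := by
  have h' := @Nat.add_mod_eq_ite p (l - j) j
  rw [Nat.sub_add_cancel h] at h'
  have := mod_lt j hp
  split_ifs at h' <;> omega

end Nat

open Nat (digit DigitwiseLE)

lemma Polynomial.coeff_mul_expand {R : Type*} [CommSemiring R] {p : ℕ} (hp : 0 < p) {A : R[X]}
    (hA : A.natDegree < p) (Q : R[X]) (n : ℕ) :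
    (A * expand R p Q).coeff n = A.coeff (n % p) * Q.coeff (n / p) := by
  induction Q using Polynomial.induction_on' with
  | add Q₁ Q₂ h₁ h₂ => simp only [map_add, mul_add, coeff_add, h₁, h₂]
  | monomial k c =>
    rw [expand_monomial, ← C_mul_X_pow_eq_monomial, ← mul_assoc, coeff_mul_X_pow', coeff_mul_C,
      coeff_monomial]
    by_cases hk : k = n / p
    · subst hk
      rw [if_pos rfl, if_pos (Nat.div_mul_le_self n p), Nat.mod_def, mul_comm p]
    · rw [if_neg hk, mul_zero, ite_eq_right_iff]
      intro hkn
      have hk' : k + 1 ≤ n / p := lt_of_le_of_ne ((Nat.le_div_iff_mul_le hp).2 hkn) hk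
      have := (Nat.le_div_iff_mul_le hp).1 hk'
      rw [Nat.succ_mul] at this
      rw [coeff_eq_zero_of_natDegree_lt (by omega), zero_mul]

lemma Matrix.map_pow_map_pow {m n R : Type*} [Monoid R] (g : Matrix m n R) (p k : ℕ) :
    (g.map (· ^ p)).map (· ^ p ^ k) = g.map (· ^ p ^ (k + 1)) := by
  simp only [Matrix.map_map, Function.comp_def, ← pow_mul, pow_succ']

lemma Matrix.submatrix_val_mul_submatrix_val {n α : Type*} [Fintype n]
    [NonUnitalNonAssocSemiring α] (S : n → Prop) [DecidablePred S] (M N : Matrix n n α)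
    (hN : ∀ r i, S i → ¬ S r → N r i = 0) :
    (M * N).submatrix (Subtype.val : Subtype S → n) Subtype.val =
      (M.submatrix Subtype.val Subtype.val * N.submatrix Subtype.val Subtype.val :
        Matrix (Subtype S) (Subtype S) α) := by
  ext j i
  simp only [Matrix.submatrix_apply, Matrix.mul_apply]
  rw [← Fintype.sum_subtype_add_sum_subtype S, Fintype.sum_eq_zero
    (fun r : {r // ¬ S r} => M j r * N r i) fun r => by rw [hN r i i.2 r.2, mul_zero], add_zero]

section SymmetricPower

variable {B : Type*} [CommRing B]

/-- `(aX + cY)^m (bX + dY)^n` at `Y = 1`, for `g = (a b; c d)`. -/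
noncomputable def formPow (g : Matrix (Fin 2) (Fin 2) B) (m n : ℕ) : B[X] :=
  (C (g 0 0) * X + C (g 1 0)) ^ m * (C (g 0 1) * X + C (g 1 1)) ^ n

noncomputable def binaryFormPow (g : Matrix (Fin 2) (Fin 2) B) (m n : ℕ) :
    MvPolynomial (Fin 2) B :=
  (MvPolynomial.C (g 0 0) * MvPolynomial.X 0 + MvPolynomial.C (g 1 0) * MvPolynomial.X 1) ^ m *
    (MvPolynomial.C (g 0 1) * MvPolynomial.X 0 + MvPolynomial.C (g 1 1) * MvPolynomial.X 1) ^ n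

lemma symPowMat_apply (r : ℕ) (g : Matrix (Fin 2) (Fin 2) B) (j i : Fin (r + 1)) :
    symPowMat r g j i = (formPow g (r - i) i).coeff (r - j) := rfl

lemma natDegree_formPow_le (g : Matrix (Fin 2) (Fin 2) B) (m n : ℕ) :
    (formPow g m n).natDegree ≤ m + n := by
  unfold formPow
  refine natDegree_mul_le.trans (_root_.add_le_add ?_ ?_) <;>
    exact (natDegree_pow_le_of_le _ natDegree_linear_le).trans_eq (mul_one _)

lemma homogenize_formPow (g : Matrix (Fin 2) (Fin 2) B) (m n : ℕ) :
    (formPow g m n).homogenize (m + n) = binaryFormPow g m n := by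
  have hlin (a c : B) : (MvPolynomial.C a * MvPolynomial.X 0 +
      MvPolynomial.C c * MvPolynomial.X (1 : Fin 2)).IsHomogeneous 1 :=
    (MvPolynomial.isHomogeneous_C_mul_X a 0).add (MvPolynomial.isHomogeneous_C_mul_X c 1)
  refine homogenize_eq_of_isHomogeneous ?_ ?_
  · have := ((hlin (g 0 0) (g 1 0)).pow m).mul ((hlin (g 0 1) (g 1 1)).pow n)
    rwa [one_mul, one_mul] at this
  · simp [binaryFormPow, formPow]

lemma formPow_mul (g h : Matrix (Fin 2) (Fin 2) B) (m n : ℕ) :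
    formPow (g * h) m n =
      MvPolynomial.aeval ![formPow g 1 0, formPow g 0 1] (binaryFormPow h m n) := by
  simp [binaryFormPow, formPow, Matrix.mul_apply, Fin.sum_univ_two]
  ring

lemma aeval_homogenize (F : B[X]) (n : ℕ) (g : Matrix (Fin 2) (Fin 2) B) :
    MvPolynomial.aeval ![formPow g 1 0, formPow g 0 1] (F.homogenize n) =
      ∑ r ∈ Finset.range (n + 1), C (F.coeff (n - r)) * formPow g (n - r) r := by
  rw [homogenize, map_sum, ← Finset.Nat.sum_antidiagonal_swap]
  simp only [Prod.fst_swap, Prod.snd_swap]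
  rw [Finset.Nat.sum_antidiagonal_eq_sum_range_succ (fun b a => MvPolynomial.aeval
    ![formPow g 1 0, formPow g 0 1] (MvPolynomial.monomial (fun₀ | 0 => a | 1 => b) (F.coeff a)))]
  refine Finset.sum_congr rfl fun r _ => ?_
  simp [MvPolynomial.aeval_monomial, formPow, Finsupp.prod_fintype, Fin.prod_univ_two]

theorem symPowMat_mul (l : ℕ) (g h : Matrix (Fin 2) (Fin 2) B) :
    symPowMat l (g * h) = symPowMat l g * symPowMat l h := by
  ext j i
  rw [symPowMat_apply, formPow_mul, ← homogenize_formPow, Nat.sub_add_cancel (Fin.is_le i),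
    aeval_homogenize, finsetSum_coeff, Matrix.mul_apply, ← Fin.sum_univ_eq_sum_range
      (fun r => (C ((formPow h (l - i) i).coeff (l - r)) * formPow g (l - r) r).coeff (l - j))]
  simp only [coeff_C_mul, symPowMat_apply]
  exact Finset.sum_congr rfl fun _ _ => mul_comm _ _

theorem symPowMat_one (l : ℕ) : symPowMat l (1 : Matrix (Fin 2) (Fin 2) B) = 1 := by
  ext j i
  have : l - j = l - i ↔ (j : ℕ) = i := by omega
  simp [symPowMat_apply, formPow, coeff_X_pow, Matrix.one_apply, Fin.ext_iff, this]

section CharP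

variable {p : ℕ} [Fact p.Prime] [CharP B p]

lemma formPow_pow_char (g : Matrix (Fin 2) (Fin 2) B) (m n : ℕ) :
    formPow g m n ^ p = expand B p (formPow (g.map (· ^ p)) m n) := by
  rw [← map_frobenius_expand, map_expand]
  simp [formPow, Polynomial.map_mul, Polynomial.map_pow, frobenius_def]

lemma formPow_add_mul (g : Matrix (Fin 2) (Fin 2) B) (m₀ m₁ n₀ n₁ : ℕ) :
    formPow g (m₀ + p * m₁) (n₀ + p * n₁) =
      formPow g m₀ n₀ * expand B p (formPow (g.map (· ^ p)) m₁ n₁) := by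
  rw [← formPow_pow_char]
  simp only [formPow]
  ring

lemma coeff_formPow_sub_eq_ite (g : Matrix (Fin 2) (Fin 2) B) {l i j : ℕ} (hi : i % p ≤ l % p)
    (hil : i ≤ l) (hjl : j ≤ l) :
    (formPow g (l - i) i).coeff (l - j) = if j % p ≤ l % p then
      (formPow g (l % p - i % p) (i % p)).coeff (l % p - j % p) *
        (formPow (g.map (· ^ p)) (l / p - i / p) (i / p)).coeff (l / p - j / p) else 0 := by
  have hp := (Fact.out : p.Prime).pos
  have hlp := Nat.mod_lt l hp
  have hdeg : (formPow g (l % p - i % p) (i % p)).natDegree ≤ l % p :=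
    (natDegree_formPow_le _ _ _).trans_eq (Nat.sub_add_cancel hi)
  rw [show formPow g (l - i) i = formPow g ((l % p - i % p) + p * (l / p - i / p))
      (i % p + p * (i / p)) by rw [← Nat.sub_eq_mod_sub_add_mul_div_sub hi hil, Nat.mod_add_div],
    formPow_add_mul, coeff_mul_expand hp (by omega)]
  split_ifs with hj
  · have hlt : l % p - j % p < p := by omega
    rw [Nat.sub_eq_mod_sub_add_mul_div_sub hj hjl, Nat.add_mul_mod_self_left,
      Nat.add_mul_div_left _ _ hp, Nat.mod_eq_of_lt hlt, Nat.div_eq_of_lt hlt, zero_add]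
  · have := Nat.mod_lt_sub_mod hp (not_le.1 hj) hjl
    rw [coeff_eq_zero_of_natDegree_lt (by omega), zero_mul]

open Classical in
theorem coeff_formPow_sub_eq_prod (g : Matrix (Fin 2) (Fin 2) B) {l i j : ℕ}
    (hi : DigitwiseLE p i l) (hjl : j ≤ l) :
    (formPow g (l - i) i).coeff (l - j) = if DigitwiseLE p j l then
      ∏ k ∈ Finset.range (p.digits l).length, (formPow (g.map (· ^ p ^ k))
        (digit p k l - digit p k i) (digit p k i)).coeff (digit p k l - digit p k j) else 0 := by
  have hp := (Fact.out : p.Prime).one_lt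
  induction l using Nat.strong_induction_on generalizing g i j with | _ l ih =>
  rcases l.eq_zero_or_pos with rfl | hl
  · obtain rfl : i = 0 := Nat.le_zero.1 (hi.le hp)
    obtain rfl : j = 0 := Nat.le_zero.1 hjl
    simp [formPow, hi]
  rw [Nat.digitwiseLE_iff] at hi
  rw [coeff_formPow_sub_eq_ite g hi.1 ((Nat.digitwiseLE_iff.2 hi).le hp) hjl,
    ih (l / p) (Nat.div_lt_self hl hp) _ hi.2 (Nat.div_le_div_right hjl),
    Nat.digitwiseLE_iff (j := j), Nat.digits_def' hp hl, List.length_cons,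
    Finset.prod_range_succ']
  simp only [Nat.digit_succ, Nat.digit_zero, Matrix.map_pow_map_pow, pow_zero, pow_one,
    Matrix.map_id']
  rw [ite_and]
  split_ifs <;> simp [mul_comm]

end CharP

variable {p : ℕ}

lemma rhoStar_eq_submatrix (l : ℕ) (g : Matrix (Fin 2) (Fin 2) B) :
    rhoStar p l g = (symPowMat l g).submatrix Subtype.val Subtype.val := rfl

lemma digitwiseLE_of_goodIdx [Fact p.Prime] {l : ℕ} (r : goodIdx p l) : DigitwiseLE p r l :=
  (Nat.not_dvd_choose_iff_digitwiseLE Fact.out).1 r.2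

lemma symPowMat_apply_eq_zero_of_dvd_choose [Fact p.Prime] [CharP B p]
    (g : Matrix (Fin 2) (Fin 2) B) {l : ℕ} {j i : Fin (l + 1)} (hi : ¬ p ∣ l.choose i)
    (hj : p ∣ l.choose j) :
    symPowMat l g j i = 0 := by
  have hp : p.Prime := Fact.out
  rw [symPowMat_apply, coeff_formPow_sub_eq_prod g
    ((Nat.not_dvd_choose_iff_digitwiseLE hp).1 hi) j.is_le,
    if_neg (by rwa [← Nat.not_dvd_choose_iff_digitwiseLE hp, not_not])]

theorem rhoStar_mul [Fact p.Prime] [CharP B p] (l : ℕ) (g h : Matrix (Fin 2) (Fin 2) B) :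
    rhoStar p l (g * h) = rhoStar p l g * rhoStar p l h := by
  rw [rhoStar_eq_submatrix, symPowMat_mul]
  exact Matrix.submatrix_val_mul_submatrix_val _ _ _
    fun _ _ hi hr => symPowMat_apply_eq_zero_of_dvd_choose h hi (not_not.1 hr)

theorem rhoStar_one (l : ℕ) : rhoStar p l (1 : Matrix (Fin 2) (Fin 2) B) = 1 := by
  rw [rhoStar_eq_submatrix, symPowMat_one, Matrix.submatrix_one _ Subtype.val_injective]

noncomputable def rhoStarHom [Fact p.Prime] [CharP B p] (l : ℕ) :
    Matrix (Fin 2) (Fin 2) B →* Matrix (goodIdx p l) (goodIdx p l) B where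
  toFun := rhoStar p l
  map_one' := rhoStar_one l
  map_mul' := rhoStar_mul l

lemma digit_lt_succ_of_goodIdx [Fact p.Prime] {l : ℕ} (r : goodIdx p l)
    (k : Fin (p.digits l).length) : digit p k r < (p.digits l).get k + 1 := by
  simpa [Nat.lt_succ_iff, Nat.getElem_digits (Fact.out : p.Prime).one_lt]
    using digitwiseLE_of_goodIdx r k

lemma val_tensorIdx_lt (hp : 1 < p) {l : ℕ} (t : tensorIdx p l) (k : Fin (p.digits l).length) :
    (t k : ℕ) < p :=
  (Nat.lt_succ_iff.1 (t k).2).trans_lt (Nat.digits_lt_base hp (List.get_mem _ _))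

lemma digitwiseLE_sum_tensorIdx (hp : 1 < p) {l : ℕ} (t : tensorIdx p l) :
    DigitwiseLE p (∑ k, (t k : ℕ) * p ^ (k : ℕ)) l := by
  intro m
  by_cases hm : m < (p.digits l).length
  · have := Nat.lt_succ_iff.1 (t ⟨m, hm⟩).2
    rw [Nat.digit_sum_mul_pow _ (val_tensorIdx_lt hp t) ⟨m, hm⟩]
    simpa [Nat.getElem_digits hp] using this
  · rw [Nat.digit_eq_zero_of_lt ((Nat.sum_mul_pow_lt _ (val_tensorIdx_lt hp t)).trans_le
      (Nat.pow_le_pow_right hp.pos (not_lt.1 hm)))]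
    exact Nat.zero_le _

def goodIdxEquiv [hp : Fact p.Prime] (l : ℕ) : goodIdx p l ≃ tensorIdx p l where
  toFun r k := ⟨digit p k r, digit_lt_succ_of_goodIdx r k⟩
  invFun t := ⟨⟨∑ k, (t k : ℕ) * p ^ (k : ℕ), Nat.lt_succ_of_le
      ((digitwiseLE_sum_tensorIdx hp.out.one_lt t).le hp.out.one_lt)⟩,
    (Nat.not_dvd_choose_iff_digitwiseLE hp.out).2 (digitwiseLE_sum_tensorIdx hp.out.one_lt t)⟩
  left_inv r := Subtype.ext <| Fin.ext <| Nat.sum_digit_mul_pow <|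
    (Nat.lt_succ_iff.1 r.1.2).trans_lt (Nat.lt_base_pow_length_digits hp.out.one_lt)
  right_inv t := funext fun k => Fin.ext <|
    Nat.digit_sum_mul_pow _ (val_tensorIdx_lt hp.out.one_lt t) k

theorem card_goodIdx [Fact p.Prime] (l : ℕ) :
    Fintype.card (goodIdx p l) = ((p.digits l).map (· + 1)).prod := by
  simp only [Fintype.card_congr (goodIdxEquiv l), Fintype.card_pi, Fintype.card_fin,
    List.get_eq_getElem]
  exact Fin.prod_univ_fun_getElem _ (· + 1)

theorem rhoStar_eq_submatrix_rhoTensor [Fact p.Prime] [CharP B p] (l : ℕ)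
    (g : Matrix (Fin 2) (Fin 2) B) :
    rhoStar p l g = (rhoTensor p l g).submatrix (goodIdxEquiv l) (goodIdxEquiv l) := by
  have hp : p.Prime := Fact.out
  ext j i
  rw [rhoStar_eq_submatrix, Matrix.submatrix_apply, symPowMat_apply,
    coeff_formPow_sub_eq_prod g (digitwiseLE_of_goodIdx i) j.1.is_le,
    if_pos (digitwiseLE_of_goodIdx j), Matrix.submatrix_apply, rhoTensor, Matrix.of_apply,
    ← Fin.prod_univ_eq_prod_range]
  refine Finset.prod_congr rfl fun k _ => ?_
  show _ = (formPow _ ((p.digits l).get k - digit p k i) (digit p k i)).coeff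
    ((p.digits l).get k - digit p k j)
  rw [List.get_eq_getElem, Nat.getElem_digits hp.one_lt]

end SymmetricPower

/-- the submatrix `ρ_l^⋆(γ)` of the `l`-th symmetric power obtained by
deleting rows and columns at indices `r` with `p ∣ C(l,r)` is square of size
`φ_p(l) = ∏ (l_i + 1)`, the map `γ ↦ ρ_l^⋆(γ)` is a group homomorphism
`GL_2(B) → GL_{φ_p(l)}(B)`, and it is isomorphic (conjugate by an invertible matrix) to
the tensor product `ρ_{l_0} ⊗ ρ_{l_1}^{(1)} ⊗ ⋯ ⊗ ρ_{l_s}^{(s)}`. -/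
theorem stmt5 (p : ℕ) (hp : p.Prime) (B : Type*) [CommRing B] [Algebra (ZMod p) B]
    (l : ℕ) :
    Fintype.card (goodIdx p l) = ((Nat.digits p l).map (· + 1)).prod ∧
    (∀ γ : GL (Fin 2) B, IsUnit (rhoStar p l (γ : Matrix (Fin 2) (Fin 2) B))) ∧
    (∀ γ δ : GL (Fin 2) B,
      rhoStar p l ((γ * δ : GL (Fin 2) B) : Matrix (Fin 2) (Fin 2) B) =
        rhoStar p l (γ : Matrix (Fin 2) (Fin 2) B) *
          rhoStar p l (δ : Matrix (Fin 2) (Fin 2) B)) ∧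
    (∃ (U : Matrix (goodIdx p l) (tensorIdx p l) B) (V : Matrix (tensorIdx p l) (goodIdx p l) B),
      U * V = 1 ∧ V * U = 1 ∧
      ∀ γ : GL (Fin 2) B,
        rhoStar p l (γ : Matrix (Fin 2) (Fin 2) B) * U =
          U * rhoTensor p l (γ : Matrix (Fin 2) (Fin 2) B)) := by
  have := Fact.mk hp
  refine ⟨card_goodIdx l, ?_⟩
  -- `CharP B p` fails for the zero ring, where all four claims are trivial.
  rcases subsingleton_or_nontrivial B with _ | _
  · exact ⟨fun _ => isUnit_of_subsingleton _, fun _ _ => Subsingleton.elim _ _, 0, 0,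
      Subsingleton.elim _ _, Subsingleton.elim _ _, fun _ => Subsingleton.elim _ _⟩
  have : CharP B p := charP_of_injective_algebraMap (algebraMap (ZMod p) B).injective p
  refine ⟨fun γ => γ.isUnit.map (rhoStarHom l), fun γ δ => by rw [Units.val_mul, rhoStar_mul],
    (goodIdxEquiv l).toPEquiv.toMatrix, (goodIdxEquiv l).symm.toPEquiv.toMatrix, ?_, ?_,
    fun γ => ?_⟩
  · rw [← PEquiv.toMatrix_trans, ← Equiv.toPEquiv_trans, Equiv.self_trans_symm,
      Equiv.toPEquiv_refl, PEquiv.toMatrix_refl]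
  · rw [← PEquiv.toMatrix_trans, ← Equiv.toPEquiv_trans, Equiv.symm_trans_self,
      Equiv.toPEquiv_refl, PEquiv.toMatrix_refl]
  · rw [rhoStar_eq_submatrix_rhoTensor, PEquiv.mul_toMatrix_toPEquiv,
      PEquiv.toMatrix_toPEquiv_mul, Matrix.submatrix_submatrix, Equiv.self_comp_symm,
      Function.comp_id]
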